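/- arXiv:0709.1801 — 2 statements merged into one kernel-verified Lean document; each statement's English description precedes it below -/
import Mathlib

section
/- Let (H_Λ) be a compatible family of energies, γ a configuration, and x a removable point of γ. If Λ and Λ' are two bounded Borel sets, each containing x, with both H_Λ(γ − δ_x) < +∞ and H_{Λ'}(γ − δ_x) < +∞, then H_Λ(γ) − H_Λ(γ − δ_x) = H_{Λ'}(γ) − H_{Λ'}(γ − δ_x). Hence the local energy h(x, γ − δ_x) := H_Λ(γ) − H_Λ(γ − δ_x) is well defined, independently of the choice of Λ. -/
open Bornology

/-!
Both `Λ` and `Λ'` contain the bounded Borel set `Λ ∩ Λ'`, which contains `x`. By compatibility,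
`H_Λ = H_{Λ ∩ Λ'} + φ(· ∩ (Λ ∩ Λ')ᶜ)`, and removing `x ∈ Λ ∩ Λ'` does not change the trace of the
configuration outside `Λ ∩ Λ'`. So `H_Λ(γ)` and `H_Λ(γ \ {x})` exceed their `Λ ∩ Λ'`-energies by
the same amount, and likewise for `Λ'`; the cross identity is then a rearrangement of sums.
-/

theorem Set.diff_singleton_inter_compl_of_mem {α : Type*} {γ s : Set α} {x : α} (hx : x ∈ s) :
    (γ \ {x}) ∩ sᶜ = γ ∩ sᶜ := by
  ext y
  simp only [Set.mem_inter_iff, Set.mem_sdiff, Set.mem_singleton_iff, Set.mem_compl_iff]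
  exact ⟨fun ⟨⟨hy, _⟩, hys⟩ => ⟨hy, hys⟩, fun ⟨hy, hys⟩ => ⟨⟨hy, fun h => hys (h ▸ hx)⟩, hys⟩⟩

theorem exists_energy_eq_add_of_mem {α M : Type*} [Add M] {H : Set α → Set α → M}
    {Λ₀ Λ : Set α} {φ : Set α → M} (hφ : ∀ γ, H Λ γ = H Λ₀ γ + φ (γ ∩ Λ₀ᶜ))
    (γ : Set α) {x : α} (hx : x ∈ Λ₀) :
    ∃ c, H Λ γ = H Λ₀ γ + c ∧ H Λ (γ \ {x}) = H Λ₀ (γ \ {x}) + c :=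
  ⟨φ (γ ∩ Λ₀ᶜ), hφ γ, by rw [hφ, Set.diff_singleton_inter_compl_of_mem hx]⟩

theorem campbell_stmt2_general {d : ℕ}
    (H : Set (Fin d → ℝ) → Set (Fin d → ℝ) → WithTop ℝ)
    (compat : ∀ Λ Λ' : Set (Fin d → ℝ),
      IsBounded Λ → MeasurableSet Λ → IsBounded Λ' → MeasurableSet Λ' → Λ ⊆ Λ' →
      ∃ φ : Set (Fin d → ℝ) → WithTop ℝ,
        ∀ γ : Set (Fin d → ℝ), H Λ' γ = H Λ γ + φ (γ ∩ Λᶜ))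
    (γ : Set (Fin d → ℝ)) (x : Fin d → ℝ)
    (Λ Λ' : Set (Fin d → ℝ))
    (hΛb : IsBounded Λ) (hΛm : MeasurableSet Λ) (hxΛ : x ∈ Λ)
    (hΛ'b : IsBounded Λ') (hΛ'm : MeasurableSet Λ') (hxΛ' : x ∈ Λ') :
    H Λ γ + H Λ' (γ \ {x}) = H Λ' γ + H Λ (γ \ {x}) := by
  have hb : IsBounded (Λ ∩ Λ') := hΛb.subset Set.inter_subset_left
  have hm : MeasurableSet (Λ ∩ Λ') := hΛm.inter hΛ'm
  obtain ⟨φ, hφ⟩ := compat _ Λ hb hm hΛb hΛm Set.inter_subset_left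
  obtain ⟨ψ, hψ⟩ := compat _ Λ' hb hm hΛ'b hΛ'm Set.inter_subset_right
  obtain ⟨c, hc, hc'⟩ := exists_energy_eq_add_of_mem hφ γ ⟨hxΛ, hxΛ'⟩
  obtain ⟨c', hd, hd'⟩ := exists_energy_eq_add_of_mem hψ γ ⟨hxΛ, hxΛ'⟩
  rw [hc, hc', hd, hd']
  abel

/-- the local energy of a removable point is well defined: if
`Λ` and `Λ'` are bounded Borel sets containing `x` on which `γ \ {x}` has finite
energy, then `H Λ γ − H Λ (γ \ {x}) = H Λ' γ − H Λ' (γ \ {x})`, stated in the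
equivalent cross form `H Λ γ + H Λ' (γ \ {x}) = H Λ' γ + H Λ (γ \ {x})`
(valid in `ℝ ∪ {+∞}` since the subtracted terms are finite). -/
theorem campbell_stmt2 {d : ℕ}
    (H : Set (Fin d → ℝ) → Set (Fin d → ℝ) → WithTop ℝ)
    (compat : ∀ Λ Λ' : Set (Fin d → ℝ),
      IsBounded Λ → MeasurableSet Λ → IsBounded Λ' → MeasurableSet Λ' → Λ ⊆ Λ' →
      ∃ φ : Set (Fin d → ℝ) → WithTop ℝ,
        ∀ γ : Set (Fin d → ℝ), H Λ' γ = H Λ γ + φ (γ ∩ Λᶜ))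
    (γ : Set (Fin d → ℝ)) (x : Fin d → ℝ) (hx : x ∈ γ)
    (Λ Λ' : Set (Fin d → ℝ))
    (hΛb : IsBounded Λ) (hΛm : MeasurableSet Λ) (hxΛ : x ∈ Λ)
    (hΛ'b : IsBounded Λ') (hΛ'm : MeasurableSet Λ') (hxΛ' : x ∈ Λ')
    (hfin : H Λ (γ \ {x}) ≠ ⊤) (hfin' : H Λ' (γ \ {x}) ≠ ⊤) :
    H Λ γ + H Λ' (γ \ {x}) = H Λ' γ + H Λ (γ \ {x}) :=
  campbell_stmt2_general H compat γ x Λ Λ' hΛb hΛm hxΛ hΛ'b hΛ'm hxΛ'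
end

section
/- If K : Θ → ℝ is defined by K(θ) = E[e^{−h*}(e^{h*−h_θ} − (h* − h_θ) − 1)] where h_θ, h* are random variables with h* = h_{θ*}, and P(h* ≠ h_θ) > 0 for all θ ≠ θ* with e^{−h*}(e^{h*−h_θ} − (h*−h_θ) − 1) integrable and a.s. h* < ∞ on {h_θ < ∞}, then K(θ) ≥ 0 for all θ, and K(θ) = 0 if and only if θ = θ*. -/
/-!
Since `e^t - t - 1 > 0` for `t ≠ 0` and `e^{-h*} > 0` where `h* < ∞`, the integrand of `K(θ)`
vanishes exactly where `h* = ∞` or `h* = h_θ`. Almost surely `h* = ∞` forces `h_θ = ∞`, so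
`K(θ) = 0` iff `h* = h_θ` almost surely, which identifiability excludes for `θ ≠ θ*`.
-/

open MeasureTheory
open scoped ENNReal

open scoped Classical in
/-- The nonnegative integrand `e^{−a}(e^{a−b} − (a−b) − 1)` for
`a, b ∈ ℝ ∪ {+∞}`, with the conventions `e^{−∞} = 0` and `∞·e^{−∞} = 0`
(so the value is `0` when `a = ∞`, and `+∞` when `a < ∞` and `b = ∞`). -/
noncomputable def contrastFn (a b : WithTop ℝ) : ℝ≥0∞ :=
  if a = ⊤ then 0
  else if b = ⊤ then ⊤
  else ENNReal.ofReal
    (Real.exp (-(a.untopD 0)) *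
      (Real.exp ((a.untopD 0) - (b.untopD 0)) - ((a.untopD 0) - (b.untopD 0)) - 1))

lemma contrastFn_eq_zero_iff {a b : WithTop ℝ} : contrastFn a b = 0 ↔ a = ⊤ ∨ a = b := by
  induction a using WithTop.recTopCoe with
  | top => simp [contrastFn]
  | coe a =>
    induction b using WithTop.recTopCoe with
    | top => simp [contrastFn]
    | coe b =>
      simp only [contrastFn, WithTop.coe_ne_top, WithTop.untopD_coe, if_false,
        ENNReal.ofReal_eq_zero, WithTop.coe_eq_coe, false_or]
      constructor
      · intro hle
        by_contra hne
        have := Real.add_one_lt_exp (sub_ne_zero.mpr hne)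
        nlinarith [Real.exp_pos (-a)]
      · rintro rfl
        simp

lemma lintegral_contrastFn_eq_zero_iff {Ω : Type*} [MeasurableSpace Ω] {μ : Measure Ω}
    {f g : Ω → WithTop ℝ} (hmeas : Measurable fun ω => contrastFn (f ω) (g ω))
    (hfin : ∀ᵐ ω ∂μ, g ω ≠ ⊤ → f ω ≠ ⊤) :
    ∫⁻ ω, contrastFn (f ω) (g ω) ∂μ = 0 ↔ f =ᵐ[μ] g := by
  rw [lintegral_eq_zero_iff hmeas]
  constructor
  · intro hzero
    filter_upwards [hzero, hfin] with ω hω hωfin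
    obtain htop | heq := contrastFn_eq_zero_iff.mp hω
    · by_contra hne
      exact hωfin (fun hg => hne (htop.trans hg.symm)) htop
    · exact heq
  · intro heq
    filter_upwards [heq] with ω hω
    exact contrastFn_eq_zero_iff.mpr (Or.inr hω)

theorem campbell_stmt16_general {Ω : Type*} [MeasurableSpace Ω] {Θ : Type*}
    (μ : Measure Ω)
    (h : Θ → Ω → WithTop ℝ) (θstar : Θ)
    (hmeas : ∀ θ : Θ, Measurable fun ω => contrastFn (h θstar ω) (h θ ω))
    (hfin : ∀ θ : Θ, ∀ᵐ ω ∂μ, h θ ω ≠ ⊤ → h θstar ω ≠ ⊤)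
    (hident : ∀ θ : Θ, θ ≠ θstar → μ {ω | h θstar ω ≠ h θ ω} ≠ 0) :
    ∀ θ : Θ, 0 ≤ (∫⁻ ω, contrastFn (h θstar ω) (h θ ω) ∂μ) ∧
      ((∫⁻ ω, contrastFn (h θstar ω) (h θ ω) ∂μ) = 0 ↔ θ = θstar) := by
  intro θ
  refine ⟨zero_le, ?_⟩
  rw [lintegral_contrastFn_eq_zero_iff (hmeas θ) (hfin θ)]
  constructor
  · intro heq
    by_contra hne
    exact hident θ hne (ae_iff.mp heq)
  · rintro rfl
    rfl

/-- identifiability of the pseudo-likelihood contrast. With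
`K(θ) = E[e^{−h*}(e^{h* − h_θ} − (h* − h_θ) − 1)]`, `h* = h_{θ*}`, if
`P(h* ≠ h_θ) > 0` for every `θ ≠ θ*`, the integrand is integrable, and a.s.
`h* < ∞` on `{h_θ < ∞}`, then `K(θ) ≥ 0` for all `θ`, with `K(θ) = 0` iff
`θ = θ*`. -/
theorem campbell_stmt16 {Ω : Type*} [MeasurableSpace Ω] {Θ : Type*}
    (μ : Measure Ω) [IsProbabilityMeasure μ]
    (h : Θ → Ω → WithTop ℝ) (θstar : Θ)
    (hmeas : ∀ θ : Θ, Measurable fun ω => contrastFn (h θstar ω) (h θ ω))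
    (hint : ∀ θ : Θ, (∫⁻ ω, contrastFn (h θstar ω) (h θ ω) ∂μ) ≠ ⊤)
    (hfin : ∀ θ : Θ, ∀ᵐ ω ∂μ, h θ ω ≠ ⊤ → h θstar ω ≠ ⊤)
    (hident : ∀ θ : Θ, θ ≠ θstar → μ {ω | h θstar ω ≠ h θ ω} ≠ 0) :
    ∀ θ : Θ, 0 ≤ (∫⁻ ω, contrastFn (h θstar ω) (h θ ω) ∂μ) ∧
      ((∫⁻ ω, contrastFn (h θstar ω) (h θ ω) ∂μ) = 0 ↔ θ = θstar) :=
  campbell_stmt16_general μ h θstar hmeas hfin hident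
end
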